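/- arXiv:2603.04493 — 7 statements merged into one kernel-verified Lean document; each statement's English description precedes it below -/
import Mathlib

section
/- For any Hermitian operator X on a finite-dimensional Hilbert space, the quantity max over operators M with 0 ≤ M ≤ I of |Tr(M X)| equals (1/2)|Tr X| + (1/2)‖X‖₁, where ‖X‖₁ is the trace norm. -/
open Matrix
open scoped ComplexOrder

/-- The Schatten 1-norm (trace norm) of a complex matrix: `Tr √(XᴴX)`. -/
noncomputable def traceNorm {n : Type*} [Fintype n] [DecidableEq n] (X : Matrix n n ℂ) : ℝ :=
  (((Matrix.posSemidef_conjTranspose_mul_self X).1.eigenvectorUnitary : Matrix n n ℂ) *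
    diagonal (fun i => ((Real.sqrt ((Matrix.posSemidef_conjTranspose_mul_self X).1.eigenvalues i) : ℝ) : ℂ)) *
    (star (Matrix.posSemidef_conjTranspose_mul_self X).1.eigenvectorUnitary : Matrix n n ℂ)).trace.re

/-!
Diagonalise `X = U diag(λ) Uᴴ`. For `0 ≤ M ≤ 1` the diagonal entries `sᵢ` of `Uᴴ M U` lie in
`[0, 1]` and `Tr (M X) = ∑ sᵢ λᵢ`; conversely every `s ∈ [0, 1]ⁿ` arises from
`M = U diag(s) Uᴴ`. So the problem becomes maximising `|∑ sᵢ λᵢ|` over the cube, where the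
optimum is the indicator of the nonnegative eigenvalues or of its complement, with values
`(Tr X ± ‖X‖₁) / 2`.
-/

section unitInterval
variable {ι : Type*} [Fintype ι]

lemma mul_le_half_add_abs_of_mem_unitInterval {s x : ℝ} (hs : s ∈ unitInterval) : s * x ≤ (x + |x|) / 2 := by
  rcases le_total 0 x with hx | hx
  · rw [abs_of_nonneg hx]; nlinarith [hs.2]
  · rw [abs_of_nonpos hx]; nlinarith [hs.1]

lemma sum_mul_le_half_sum_add_sum_abs {s x : ι → ℝ} (hs : ∀ i, s i ∈ unitInterval) :
    ∑ i, s i * x i ≤ (∑ i, x i + ∑ i, |x i|) / 2 := by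
  rw [← Finset.sum_add_distrib, Finset.sum_div]
  exact Finset.sum_le_sum fun i _ => mul_le_half_add_abs_of_mem_unitInterval (hs i)

lemma sum_one_sub_mul {R : Type*} [Ring R] (s x : ι → R) :
    ∑ i, (1 - s i) * x i = ∑ i, x i - ∑ i, s i * x i := by
  simp only [sub_mul, one_mul, Finset.sum_sub_distrib]

lemma isGreatest_abs_sum_mul (x : ι → ℝ) :
    IsGreatest {r : ℝ | ∃ s : ι → ℝ, (∀ i, s i ∈ unitInterval) ∧ r = |∑ i, s i * x i|}
      ((|∑ i, x i| + ∑ i, |x i|) / 2) := by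
  refine ⟨?_, ?_⟩
  · set p : ι → ℝ := fun i => if 0 ≤ x i then 1 else 0
    have hp : ∀ i, p i ∈ unitInterval := fun i => by simp only [p]; split_ifs <;> simp
    have hpx : ∑ i, p i * x i = (∑ i, x i + ∑ i, |x i|) / 2 := by
      rw [← Finset.sum_add_distrib, Finset.sum_div]
      refine Finset.sum_congr rfl fun i _ => ?_
      simp only [p]
      split_ifs with h
      · rw [abs_of_nonneg h]; ring
      · rw [abs_of_neg (not_le.mp h)]; ring
    have habs : |∑ i, x i| ≤ ∑ i, |x i| := Finset.abs_sum_le_sum_abs _ _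
    rcases le_total 0 (∑ i, x i) with h | h
    · refine ⟨p, hp, ?_⟩
      rw [hpx, abs_of_nonneg h, abs_of_nonneg (by linarith [neg_abs_le (∑ i, x i)])]
    · refine ⟨fun i => 1 - p i, fun i => Set.Icc.mem_iff_one_sub_mem.mp (hp i), ?_⟩
      rw [sum_one_sub_mul, hpx, abs_of_nonpos h,
        abs_of_nonpos (by linarith [le_abs_self (∑ i, x i)])]
      ring
  · rintro r ⟨s, hs, rfl⟩
    have hup := sum_mul_le_half_sum_add_sum_abs (x := x) hs
    have hlow := sum_mul_le_half_sum_add_sum_abs (x := x) fun i =>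
      Set.Icc.mem_iff_one_sub_mem.mp (hs i)
    rw [sum_one_sub_mul] at hlow
    rw [abs_le]
    constructor <;> cases abs_cases (∑ i, x i) <;> linarith

end unitInterval

namespace Matrix

section CommRing
variable {R n : Type*} [CommRing R] [Fintype n] [DecidableEq n]

lemma trace_mul_diagonal (B : Matrix n n R) (d : n → R) :
    (B * diagonal d).trace = ∑ i, B i i * d i := by
  simp only [trace, diag, mul_diagonal]

variable [StarRing R]
open Unitary

lemma trace_conjStarAlgAut (u : unitary (Matrix n n R)) (B : Matrix n n R) :
    (conjStarAlgAut R _ u B).trace = B.trace := by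
  rw [conjStarAlgAut_apply, trace_mul_cycle, coe_star_mul_self, one_mul]

lemma PosSemidef.conjStarAlgAut [PartialOrder R] {B : Matrix n n R} (hB : B.PosSemidef)
    (u : unitary (Matrix n n R)) : (conjStarAlgAut R _ u B).PosSemidef := by
  rw [conjStarAlgAut_apply, star_eq_conjTranspose]
  exact hB.mul_mul_conjTranspose_same _

end CommRing

variable {𝕜 n : Type*} [RCLike 𝕜]

lemma PosSemidef.re_apply_self_mem_unitInterval [DecidableEq n] {B : Matrix n n 𝕜}
    (hB : B.PosSemidef) (h1B : (1 - B).PosSemidef) (i : n) :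
    RCLike.re (B i i) ∈ unitInterval := by
  have h1 := (RCLike.nonneg_iff.mp (h1B.diag_nonneg (i := i))).1
  rw [sub_apply, one_apply_eq, map_sub, RCLike.one_re] at h1
  exact ⟨(RCLike.nonneg_iff.mp hB.diag_nonneg).1, by linarith⟩

variable [Fintype n] [DecidableEq n]

namespace IsHermitian

open Unitary

lemma exists_trace_mul_eq_sum_mul_eigenvalues {A M : Matrix n n 𝕜} (hA : A.IsHermitian)
    (hM : M.PosSemidef) (h1M : (1 - M).PosSemidef) :
    ∃ s : n → ℝ, (∀ i, s i ∈ unitInterval) ∧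
      (M * A).trace = ((∑ i, s i * hA.eigenvalues i : ℝ) : 𝕜) := by
  set B := conjStarAlgAut 𝕜 _ (star hA.eigenvectorUnitary) M
  have hB : B.PosSemidef := hM.conjStarAlgAut _
  have h1B : (1 - B).PosSemidef := by
    simpa only [map_sub, map_one] using h1M.conjStarAlgAut (star hA.eigenvectorUnitary)
  refine ⟨fun i => RCLike.re (B i i), fun i => hB.re_apply_self_mem_unitInterval h1B i, ?_⟩
  rw [← trace_conjStarAlgAut (star hA.eigenvectorUnitary), map_mul,
    conjStarAlgAut_star_eigenvectorUnitary, trace_mul_diagonal]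
  push_cast
  exact Finset.sum_congr rfl fun i _ => congrArg (· * _) (hB.1.coe_re_apply_self i).symm

lemma exists_posSemidef_trace_mul_eq_sum_mul_eigenvalues {A : Matrix n n 𝕜}
    (hA : A.IsHermitian) {s : n → ℝ} (hs : ∀ i, s i ∈ unitInterval) :
    ∃ M : Matrix n n 𝕜, M.PosSemidef ∧ (1 - M).PosSemidef ∧
      (M * A).trace = ((∑ i, s i * hA.eigenvalues i : ℝ) : 𝕜) := by
  have hdiag {t : n → ℝ} (ht : ∀ i, 0 ≤ t i) :
      (diagonal (RCLike.ofReal ∘ t) : Matrix n n 𝕜).PosSemidef :=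
    PosSemidef.diagonal fun i => RCLike.ofReal_nonneg.mpr (ht i)
  refine ⟨conjStarAlgAut 𝕜 _ hA.eigenvectorUnitary (diagonal (RCLike.ofReal ∘ s)),
    (hdiag fun i => (hs i).1).conjStarAlgAut _, ?_, ?_⟩
  · have h1 : (1 : Matrix n n 𝕜) - diagonal (RCLike.ofReal ∘ s) =
        diagonal (RCLike.ofReal ∘ (1 - s)) := by
      ext i j
      by_cases h : i = j <;> simp [h]
    rw [← map_one (conjStarAlgAut 𝕜 _ hA.eigenvectorUnitary), ← map_sub, h1]
    exact (hdiag fun i => sub_nonneg.mpr (hs i).2).conjStarAlgAut _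
  · nth_rw 2 [hA.spectral_theorem]
    rw [← map_mul, trace_conjStarAlgAut, trace_mul_diagonal]
    push_cast
    simp

lemma setOf_norm_trace_mul_eq {A : Matrix n n 𝕜} (hA : A.IsHermitian) :
    {r : ℝ | ∃ M : Matrix n n 𝕜, M.PosSemidef ∧ (1 - M).PosSemidef ∧ r = ‖(M * A).trace‖} =
      {r : ℝ | ∃ s : n → ℝ, (∀ i, s i ∈ unitInterval) ∧ r = |∑ i, s i * hA.eigenvalues i|} := by
  ext r
  constructor
  · rintro ⟨M, hM, h1M, rfl⟩
    obtain ⟨s, hs, htr⟩ := hA.exists_trace_mul_eq_sum_mul_eigenvalues hM h1M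
    exact ⟨s, hs, by rw [htr, RCLike.norm_ofReal]⟩
  · rintro ⟨s, hs, rfl⟩
    obtain ⟨M, hM, h1M, htr⟩ := hA.exists_posSemidef_trace_mul_eq_sum_mul_eigenvalues hs
    exact ⟨M, hM, h1M, by rw [htr, RCLike.norm_ofReal]⟩

lemma trace_cfc {A : Matrix n n 𝕜} (hA : A.IsHermitian) (f : ℝ → ℝ) :
    (cfc f A).trace = ∑ i, (f (hA.eigenvalues i) : 𝕜) := by
  rw [hA.cfc_eq, IsHermitian.cfc, conjStarAlgAut_apply, trace_mul_cycle, coe_star_mul_self,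
    one_mul, trace_diagonal]
  rfl

lemma cfc_sqrt_conjTranspose_mul_self {A : Matrix n n 𝕜} (hA : A.IsHermitian) :
    cfc Real.sqrt (Aᴴ * A) = cfc (fun x : ℝ => |x|) A := by
  have : IsSelfAdjoint A := hA
  have hsq : Aᴴ * A = cfc (fun x : ℝ => x * x) A := by
    rw [cfc_mul (fun x : ℝ => x) (fun x => x) A, cfc_id' ℝ A, hA.eq]
  rw [hsq, ← cfc_comp Real.sqrt (fun x : ℝ => x * x) A]
  exact cfc_congr fun x _ => Real.sqrt_mul_self_eq_abs x

end IsHermitian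

end Matrix

lemma traceNorm_eq_re_trace_cfc_sqrt {n : Type*} [Fintype n] [DecidableEq n]
    (X : Matrix n n ℂ) : traceNorm X = (cfc Real.sqrt (Xᴴ * X)).trace.re := by
  rw [(posSemidef_conjTranspose_mul_self X).1.cfc_eq]
  rfl

lemma Matrix.IsHermitian.traceNorm_eq_sum_abs_eigenvalues {n : Type*} [Fintype n]
    [DecidableEq n] {X : Matrix n n ℂ} (hX : X.IsHermitian) :
    traceNorm X = ∑ i, |hX.eigenvalues i| := by
  rw [traceNorm_eq_re_trace_cfc_sqrt, hX.cfc_sqrt_conjTranspose_mul_self, hX.trace_cfc,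
    ← RCLike.ofReal_sum]
  exact Complex.ofReal_re _

/-- For any Hermitian matrix `X`, the maximum of `|Tr (M X)|` over all `M` with
`0 ≤ M ≤ I` equals `(1/2)|Tr X| + (1/2)‖X‖₁`. -/
theorem max_abs_trace_eq_half_trace_add_half_traceNorm
    {n : Type*} [Fintype n] [DecidableEq n] (X : Matrix n n ℂ) (hX : X.IsHermitian) :
    IsGreatest {r : ℝ | ∃ M : Matrix n n ℂ, M.PosSemidef ∧ (1 - M).PosSemidef ∧
        r = ‖(M * X).trace‖}
      ((1 / 2) * ‖X.trace‖ + (1 / 2) * traceNorm X) := by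
  have hvalue : (1 / 2) * ‖X.trace‖ + (1 / 2) * traceNorm X =
      (|∑ i, hX.eigenvalues i| + ∑ i, |hX.eigenvalues i|) / 2 := by
    rw [hX.traceNorm_eq_sum_abs_eigenvalues, hX.trace_eq_sum_eigenvalues, ← RCLike.ofReal_sum,
      RCLike.norm_ofReal]
    ring
  rw [hX.setOf_norm_trace_mul_eq, hvalue]
  exact isGreatest_abs_sum_mul hX.eigenvalues
end

section
/- Let σ ≥ 0 be a positive semidefinite matrix and define J_σ(X) = (σX + Xσ)/2. Then the equation J_σ(Z) = Y has a Hermitian solution Z if and only if Π⊥ Y Π⊥ = 0, where Π⊥ is the orthogonal projection onto the kernel of σ. -/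
/-!
Diagonalise `σ = U diag(λ) U*` with `λ ≥ 0`. In the eigenbasis the equation reads
`(λᵢ + λⱼ) Ẑᵢⱼ = 2 Ŷᵢⱼ` with `Ŷ = U* Y U`, which is solvable (by a Hermitian `Ẑ`) exactly when
`Ŷᵢⱼ = 0` whenever `λᵢ + λⱼ = 0`, i.e. whenever both eigenvectors lie in `ker σ`.
Conversely, `σZ + Zσ` vanishes as a sesquilinear form on `ker σ`.
-/

open Matrix
open scoped ComplexOrder

namespace Matrix

variable {n : Type*} [Fintype n]

theorem IsHermitian.star_dotProduct_mul_add_mul_mulVec_eq_zero {R : Type*} [CommRing R]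
    [StarRing R] {σ : Matrix n n R} (hσ : σ.IsHermitian) (Z : Matrix n n R) {v w : n → R}
    (hv : σ *ᵥ v = 0) (hw : σ *ᵥ w = 0) : star v ⬝ᵥ ((σ * Z + Z * σ) *ᵥ w) = 0 := by
  have hvσ : star v ᵥ* σ = 0 := by rw [← hσ.eq, ← star_mulVec, hv, star_zero]
  rw [add_mulVec, ← mulVec_mulVec, ← mulVec_mulVec, hw, mulVec_zero, add_zero,
    dotProduct_mulVec, hvσ, zero_dotProduct]

theorem conjTranspose_mul_mul_apply {R : Type*} [CommSemiring R] [StarRing R]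
    (B Y C : Matrix n n R) (i j : n) :
    (Bᴴ * Y * C) i j = star (fun k => B k i) ⬝ᵥ (Y *ᵥ fun k => C k j) := by
  simp only [mul_apply, conjTranspose_apply, dotProduct, mulVec, Pi.star_apply,
    Finset.sum_mul, Finset.mul_sum]
  rw [Finset.sum_comm]
  simp only [mul_assoc]

variable [DecidableEq n] {𝕜 : Type*} [RCLike 𝕜]

theorem exists_isHermitian_diagonal_mul_add_mul_diagonal_eq (d : n → ℝ)
    {Y : Matrix n n 𝕜} (hY : Y.IsHermitian) (hYd : ∀ i j, d i + d j = 0 → Y i j = 0) :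
    ∃ Z : Matrix n n 𝕜, Z.IsHermitian ∧
      diagonal (RCLike.ofReal ∘ d) * Z + Z * diagonal (RCLike.ofReal ∘ d) = (2 : 𝕜) • Y := by
  -- On the block `d i + d j = 0` the junk value `x / 0 = 0` is the right entry.
  refine ⟨of fun i j => 2 * Y i j / (d i + d j : ℝ), ?_, ?_⟩
  · ext i j
    simp [← hY.apply i j, add_comm]
  · ext i j
    simp only [add_apply, diagonal_mul, mul_diagonal, of_apply, Function.comp_apply, smul_apply,
      smul_eq_mul]
    by_cases hij : d i + d j = 0
    · simp [hYd i j hij]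
    · have : ((d i + d j : ℝ) : 𝕜) ≠ 0 := by exact_mod_cast hij
      push_cast at this ⊢
      field_simp

theorem IsHermitian.mulVec_eigenvectorBasis_eq_zero {A : Matrix n n 𝕜} (hA : A.IsHermitian)
    {i : n} (hi : hA.eigenvalues i = 0) : A *ᵥ ⇑(hA.eigenvectorBasis i) = 0 := by
  rw [hA.mulVec_eigenvectorBasis, hi, zero_smul]

theorem PosSemidef.star_eigenvectorUnitary_mul_mul_apply_eq_zero {σ Y : Matrix n n 𝕜}
    (hσ : σ.PosSemidef)
    (hY : ∀ v w : n → 𝕜, σ *ᵥ v = 0 → σ *ᵥ w = 0 → star v ⬝ᵥ (Y *ᵥ w) = 0) {i j : n}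
    (hij : hσ.1.eigenvalues i + hσ.1.eigenvalues j = 0) :
    (star (hσ.1.eigenvectorUnitary : Matrix n n 𝕜) * Y * hσ.1.eigenvectorUnitary) i j = 0 := by
  have hi := hσ.eigenvalues_nonneg i
  have hj := hσ.eigenvalues_nonneg j
  rw [star_eq_conjTranspose, conjTranspose_mul_mul_apply]
  exact hY _ _ (hσ.1.mulVec_eigenvectorBasis_eq_zero (by linarith))
    (hσ.1.mulVec_eigenvectorBasis_eq_zero (by linarith))

end Matrix

open Unitary in
/-- For positive semidefinite `σ` and Hermitian `Y`, the Lyapunov-type equation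
`J_σ(Z) = (σZ + Zσ)/2 = Y` has a Hermitian solution `Z` if and only if
`Π⊥ Y Π⊥ = 0`, where `Π⊥` is the orthogonal projection onto `ker σ`
(expressed here as: `Y` is zero as a quadratic form on vectors in the kernel of `σ`). -/
theorem exists_hermitian_solution_iff_kernel_block_zero
    {n : Type*} [Fintype n] [DecidableEq n] (σ Y : Matrix n n ℂ)
    (hσ : σ.PosSemidef) (hY : Y.IsHermitian) :
    (∃ Z : Matrix n n ℂ, Z.IsHermitian ∧ σ * Z + Z * σ = (2 : ℂ) • Y) ↔
      (∀ v w : n → ℂ, σ *ᵥ v = 0 → σ *ᵥ w = 0 → star v ⬝ᵥ (Y *ᵥ w) = 0) := by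
  refine ⟨fun ⟨Z, _, hZ⟩ v w hv hw => ?_, fun h => ?_⟩
  · have h2 := hσ.1.star_dotProduct_mul_add_mul_mulVec_eq_zero Z hv hw
    rw [hZ, smul_mulVec, dotProduct_smul, smul_eq_mul] at h2
    exact (mul_eq_zero.mp h2).resolve_left two_ne_zero
  set φ := conjStarAlgAut ℂ (Matrix n n ℂ) hσ.1.eigenvectorUnitary
  obtain ⟨Z, hZ, hZeq⟩ := exists_isHermitian_diagonal_mul_add_mul_diagonal_eq hσ.1.eigenvalues
    (isHermitian_conjTranspose_mul_mul _ hY) fun i j =>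
      hσ.star_eigenvectorUnitary_mul_mul_apply_eq_zero h
  refine ⟨φ Z, isHermitian_iff_isSelfAdjoint.2 (hZ.isSelfAdjoint.map φ), ?_⟩
  rw [hσ.1.spectral_theorem, ← map_mul, ← map_mul, ← map_add, hZeq, map_smul]
  exact congrArg _ (φ.apply_symm_apply Y)
end

section
/- Let E be a positive, sub-unital linear map on matrices (E(I) ≤ I). Then for any 0 ≤ W ≤ I, Kadison's inequality gives (E(W))² ≤ E(W²), and consequently for any states ρ, σ and ε ≥ 0, the quantity sup_{0≤W≤I} (Tr(Wρ) − ε)₊² / Tr(W²σ) is monotone non-increasing under any positive trace-non-increasing map applied to (ρ, σ). -/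
open Matrix
open scoped ComplexOrder ENNReal

/-- The dual variational quantity `sup_{0 ≤ W ≤ I} (Tr(Wρ) − ε)₊² / Tr(W²σ)`,
valued in `ℝ≥0∞` with the conventions `a/0 = ∞` for `a > 0` and `0/0 = 0`. -/
noncomputable def dualQ {n : Type*} [Fintype n] [DecidableEq n]
    (ρ σ : Matrix n n ℂ) (ε : ℝ) : ℝ≥0∞ :=
  ⨆ W ∈ {W : Matrix n n ℂ | W.PosSemidef ∧ (1 - W).PosSemidef},
    ENNReal.ofReal (max (((W * ρ).trace).re - ε) 0 ^ 2) /
      ENNReal.ofReal (((W * W * σ).trace).re)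

/-!
Kadison's inequality: write a Hermitian `W = ∑ λᵢ Pᵢ` with spectral projections `Pᵢ ≥ 0`,
`∑ Pᵢ = 1`. For `Qᵢ = E Pᵢ` and `A = E W = ∑ λᵢ Qᵢ`,
`E (W²) - A² = ∑ (λᵢ - A) Qᵢ (λᵢ - A) + A (1 - ∑ Qᵢ) A ≥ 0` because `∑ Qᵢ = E 1 ≤ 1`.

Monotonicity: the adjoint `F†` of a positive trace-non-increasing `F` is positive and sub-unital,
so `W ↦ F† W` maps `{0 ≤ W ≤ I}` into itself. It preserves the numerator,
`Tr (W F ρ) = Tr (F† W ρ)`, and by Kadison's inequality for `F†` it can only decrease the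
denominator: `Tr (W² F σ) = Tr (F† (W²) σ) ≥ Tr ((F† W)² σ)`.
-/

open scoped MatrixOrder ComplexStarModule

section StarOrderedRing

variable {R ι : Type*} [Ring R] [PartialOrder R] [StarRing R] [StarOrderedRing R]
  [Algebra ℝ R] [StarModule ℝ R]

theorem sum_smul_mul_sum_smul_le (s : Finset ι) {Q : ι → R} (hQ : ∀ i ∈ s, 0 ≤ Q i)
    (hS : ∑ i ∈ s, Q i ≤ 1) (c : ι → ℝ) :
    (∑ i ∈ s, c i • Q i) * (∑ i ∈ s, c i • Q i) ≤ ∑ i ∈ s, c i ^ 2 • Q i := by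
  set A := ∑ i ∈ s, c i • Q i
  have hA : IsSelfAdjoint A :=
    isSelfAdjoint_sum s fun i hi => (IsSelfAdjoint.all (c i)).smul (.of_nonneg (hQ i hi))
  have hterm (i : ι) : (c i • 1 - A) * Q i * (c i • 1 - A) =
      c i ^ 2 • Q i - A * (c i • Q i) - (c i • Q i) * A + A * Q i * A := by
    simp only [sub_mul, mul_sub, smul_mul_assoc, mul_smul_comm, one_mul, mul_one]
    module
  have key : ∑ i ∈ s, c i ^ 2 • Q i - A * A =
      ∑ i ∈ s, (c i • 1 - A) * Q i * (c i • 1 - A) + A * (1 - ∑ i ∈ s, Q i) * A := by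
    rw [Finset.sum_congr rfl fun i _ => hterm i]
    simp only [Finset.sum_add_distrib, Finset.sum_sub_distrib, ← Finset.mul_sum,
      ← Finset.sum_mul, mul_sub, sub_mul, mul_one]
    abel
  rw [← sub_nonneg, key]
  exact add_nonneg
    (Finset.sum_nonneg fun i hi =>
      (((IsSelfAdjoint.all (c i)).smul (.one R)).sub hA).conjugate_nonneg (hQ i hi))
    (hA.conjugate_nonneg (sub_nonneg.2 hS))

end StarOrderedRing

namespace Matrix

section

variable {n : Type*} [Fintype n]

theorem dotProduct_mulVec_eq_trace_mul_vecMulVec (M : Matrix n n ℂ) (x : n → ℂ) :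
    star x ⬝ᵥ (M *ᵥ x) = (M * vecMulVec x (star x)).trace := by
  rw [mul_vecMulVec, trace_vecMulVec, dotProduct_comm]

variable [DecidableEq n]

theorem IsHermitian.exists_sum_smul_eq {W : Matrix n n ℂ} (hW : W.IsHermitian) :
    ∃ (P : n → Matrix n n ℂ) (c : n → ℝ), (∀ i, 0 ≤ P i) ∧ ∑ i, P i = 1 ∧
      W = ∑ i, c i • P i ∧ W * W = ∑ i, c i ^ 2 • P i := by
  set conj := Unitary.conjStarAlgAut ℂ (Matrix n n ℂ) hW.eigenvectorUnitary
  have hconj (f : n → ℝ) :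
      conj (diagonal (RCLike.ofReal ∘ f)) = ∑ i, f i • conj (single i i 1) := by
    simp only [← sum_single_eq_diagonal, map_sum, Function.comp_apply]
    refine Finset.sum_congr rfl fun i _ => ?_
    rw [← Complex.coe_smul, ← map_smul, smul_single, smul_eq_mul, mul_one]
    rfl
  have hW1 : W = conj (diagonal (RCLike.ofReal ∘ hW.eigenvalues)) := hW.spectral_theorem
  have hW2 : W * W = conj (diagonal (RCLike.ofReal ∘ (hW.eigenvalues ^ 2))) := by
    have hD : diagonal (RCLike.ofReal ∘ (hW.eigenvalues ^ 2) : n → ℂ) =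
        diagonal (RCLike.ofReal ∘ hW.eigenvalues) * diagonal (RCLike.ofReal ∘ hW.eigenvalues) := by
      rw [diagonal_mul_diagonal]
      congr 1; ext i; simp [sq]
    rw [hD, map_mul, ← hW1]
  refine ⟨fun i => conj (single i i 1), hW.eigenvalues, fun i => map_nonneg conj ?_, ?_,
    hW1.trans (hconj _), hW2.trans (hconj _)⟩
  · rw [nonneg_iff_posSemidef, ← diagonal_single]
    exact posSemidef_diagonal_iff.2 fun j => by by_cases h : j = i <;> simp [h]
  · rw [← map_sum, sum_single_one, map_one]

theorem PosSemidef.trace_mul_nonneg {A B : Matrix n n ℂ} (hA : A.PosSemidef)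
    (hB : B.PosSemidef) : 0 ≤ (A * B).trace := by
  obtain ⟨C, rfl⟩ := CStarAlgebra.nonneg_iff_eq_star_mul_self.mp hA.nonneg
  rw [← trace_mul_cycle]
  exact (hB.mul_mul_conjTranspose_same C).trace_nonneg

theorem trace_mul_le_trace_mul_of_le {A B σ : Matrix n n ℂ} (hAB : A ≤ B) (hσ : σ.PosSemidef) :
    (A * σ).trace ≤ (B * σ).trace := by
  rw [← sub_nonneg, ← trace_sub, ← sub_mul]
  exact PosSemidef.trace_mul_nonneg hAB hσ

end

variable {m n : Type*}

def IsPositiveMap (Φ : Matrix m m ℂ →ₗ[ℂ] Matrix n n ℂ) : Prop :=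
  ∀ A : Matrix m m ℂ, A.PosSemidef → (Φ A).PosSemidef

namespace IsPositiveMap

variable {Φ : Matrix m m ℂ →ₗ[ℂ] Matrix n n ℂ}

theorem map_nonneg (hΦ : IsPositiveMap Φ) {A : Matrix m m ℂ} (hA : 0 ≤ A) : 0 ≤ Φ A :=
  nonneg_iff_posSemidef.2 (hΦ A (nonneg_iff_posSemidef.1 hA))

theorem monotone (hΦ : IsPositiveMap Φ) : Monotone Φ := fun A B hAB => by
  simpa only [le_iff, map_sub] using hΦ _ hAB

variable [Fintype m] [DecidableEq m] [Fintype n]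

theorem isHermitian_map (hΦ : IsPositiveMap Φ) {H : Matrix m m ℂ} (hH : H.IsHermitian) :
    (Φ H).IsHermitian :=
  IsSelfAdjoint.map' hH (PositiveLinearMap.mk₀ Φ fun _ => hΦ.map_nonneg)

theorem map_conjTranspose (hΦ : IsPositiveMap Φ) (X : Matrix m m ℂ) : Φ Xᴴ = (Φ X)ᴴ := by
  have hre : (ℜ X : Matrix m m ℂ).IsHermitian := (ℜ X).2
  have him : (ℑ X : Matrix m m ℂ).IsHermitian := (ℑ X).2
  conv_lhs => rw [← realPart_add_I_smul_imaginaryPart X]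
  conv_rhs => rw [← realPart_add_I_smul_imaginaryPart X]
  simp only [map_add, map_smul, conjTranspose_add, conjTranspose_smul, hre.eq, him.eq,
    (hΦ.isHermitian_map hre).eq, (hΦ.isHermitian_map him).eq]

theorem kadison [DecidableEq n] (hΦ : IsPositiveMap Φ) (hΦ1 : Φ 1 ≤ 1)
    {W : Matrix m m ℂ} (hW : W.IsHermitian) : Φ W * Φ W ≤ Φ (W * W) := by
  obtain ⟨P, c, hP, hPsum, rfl, hWW⟩ := hW.exists_sum_smul_eq
  rw [hWW]
  simp only [map_sum, LinearMap.map_smul_of_tower]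
  exact sum_smul_mul_sum_smul_le _ (fun i _ => hΦ.map_nonneg (hP i))
    (by rwa [← map_sum, hPsum]) c

end IsPositiveMap

variable [Fintype m] [Fintype n] [DecidableEq m] [DecidableEq n]

/-- The adjoint for the trace pairing `(A, B) ↦ Tr (A B)`. For positive `Φ`, which commutes with
`ᴴ`, it coincides with the Hilbert–Schmidt adjoint `Φ†`. -/
def traceAdjoint (Φ : Matrix m m ℂ →ₗ[ℂ] Matrix n n ℂ) : Matrix n n ℂ →ₗ[ℂ] Matrix m m ℂ where
  toFun A := of fun k l => (A * Φ (single l k 1)).trace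
  map_add' A B := by ext; simp [add_mul]
  map_smul' c A := by ext; simp

theorem trace_traceAdjoint_mul (Φ : Matrix m m ℂ →ₗ[ℂ] Matrix n n ℂ) (A : Matrix n n ℂ)
    (B : Matrix m m ℂ) : (traceAdjoint Φ A * B).trace = (A * Φ B).trace := by
  induction B using Matrix.induction_on' with
  | h_zero => simp
  | h_add p q hp hq => simp [mul_add, hp, hq]
  | h_std_basis k l x =>
    rw [trace_mul_single, ← mul_one x, ← smul_eq_mul, ← smul_single, map_smul, mul_smul_comm,
      trace_smul]
    simp [traceAdjoint, mul_comm]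

namespace IsPositiveMap

variable {Φ : Matrix m m ℂ →ₗ[ℂ] Matrix n n ℂ}

theorem traceAdjoint (hΦ : IsPositiveMap Φ) : IsPositiveMap (traceAdjoint Φ) := by
  intro A hA
  refine .of_dotProduct_mulVec_nonneg ?_ fun x => ?_
  · ext k l
    simp only [conjTranspose_apply, Matrix.traceAdjoint, LinearMap.coe_mk, AddHom.coe_mk,
      of_apply]
    rw [← trace_conjTranspose, conjTranspose_mul, ← hΦ.map_conjTranspose, hA.1.eq,
      conjTranspose_single, star_one, trace_mul_comm]
  · rw [dotProduct_mulVec_eq_trace_mul_vecMulVec, trace_traceAdjoint_mul]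
    exact hA.trace_mul_nonneg (hΦ _ (posSemidef_vecMulVec_self_star x))

theorem traceAdjoint_one_le (hΦ : IsPositiveMap Φ)
    (htr : ∀ A : Matrix m m ℂ, A.PosSemidef → (Φ A).trace.re ≤ A.trace.re) :
    Matrix.traceAdjoint Φ 1 ≤ 1 := by
  refine .of_dotProduct_mulVec_nonneg (isHermitian_one.sub (hΦ.traceAdjoint 1 .one).1)
    fun x => ?_
  set P := vecMulVec x (star x)
  have hP : P.PosSemidef := posSemidef_vecMulVec_self_star x
  rw [dotProduct_mulVec_eq_trace_mul_vecMulVec, sub_mul, trace_sub, one_mul,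
    trace_traceAdjoint_mul, one_mul, sub_nonneg, Complex.le_def]
  exact ⟨htr P hP, by rw [← (Complex.nonneg_iff.1 hP.trace_nonneg).2,
    ← (Complex.nonneg_iff.1 (hΦ P hP).trace_nonneg).2]⟩

end IsPositiveMap

end Matrix

theorem dualQ_map_le {n : Type*} [Fintype n] [DecidableEq n] {F : Matrix n n ℂ →ₗ[ℂ] Matrix n n ℂ}
    (hF : IsPositiveMap F) (htr : ∀ A : Matrix n n ℂ, A.PosSemidef → (F A).trace.re ≤ A.trace.re)
    (ρ : Matrix n n ℂ) {σ : Matrix n n ℂ} (hσ : σ.PosSemidef) (ε : ℝ) :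
    dualQ (F ρ) (F σ) ε ≤ dualQ ρ σ ε := by
  refine iSup₂_le fun W ⟨hW0, hW1⟩ => ?_
  set V := traceAdjoint F W
  have hV : V.PosSemidef ∧ V ≤ 1 :=
    ⟨hF.traceAdjoint W hW0, (hF.traceAdjoint.monotone hW1).trans (hF.traceAdjoint_one_le htr)⟩
  have hnum : (W * F ρ).trace = (V * ρ).trace := (trace_traceAdjoint_mul F W ρ).symm
  have hden : (V * V * σ).trace.re ≤ (W * W * F σ).trace.re := by
    rw [← trace_traceAdjoint_mul]
    exact (Complex.le_def.1 <| trace_mul_le_trace_mul_of_le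
      (hF.traceAdjoint.kadison (hF.traceAdjoint_one_le htr) hW0.1) hσ).1
  refine le_iSup₂_of_le V hV ?_
  rw [hnum]
  exact ENNReal.div_le_div_left (ENNReal.ofReal_le_ofReal hden) _

/-- Kadison's inequality for a positive sub-unital map `E`: `(E W)² ≤ E (W²)` for `0 ≤ W ≤ I`;
and consequently the quantity `sup_{0≤W≤I} (Tr(Wρ) − ε)₊²/Tr(W²σ)` is monotone non-increasing
under any positive trace-non-increasing map applied to the pair `(ρ, σ)`. -/
theorem kadison_and_dualQ_monotone {n : Type*} [Fintype n] [DecidableEq n]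
    (E : Matrix n n ℂ →ₗ[ℂ] Matrix n n ℂ)
    (hEpos : ∀ A : Matrix n n ℂ, A.PosSemidef → (E A).PosSemidef)
    (hEsub : (1 - E 1).PosSemidef) :
    (∀ W : Matrix n n ℂ, W.PosSemidef → (1 - W).PosSemidef →
        (E (W * W) - E W * E W).PosSemidef) ∧
      (∀ F : Matrix n n ℂ →ₗ[ℂ] Matrix n n ℂ,
        (∀ A : Matrix n n ℂ, A.PosSemidef → (F A).PosSemidef) →
        (∀ A : Matrix n n ℂ, A.PosSemidef → ((F A).trace).re ≤ (A.trace).re) →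
        ∀ (ρ σ : Matrix n n ℂ), ρ.PosSemidef → ρ.trace = 1 → σ.PosSemidef → σ.trace = 1 →
        ∀ ε : ℝ, 0 ≤ ε → dualQ (F ρ) (F σ) ε ≤ dualQ ρ σ ε) :=
  ⟨fun _ hW _ => IsPositiveMap.kadison hEpos hEsub hW.1,
    fun _ hFpos hFtr ρ _ _ _ hσ _ ε _ => dualQ_map_le hFpos hFtr ρ hσ ε⟩
end

section
/- Let p be a probability distribution and q a nonnegative distribution on a finite alphabet, and ε ∈ [0,1). Define p'(x) = min{p(x), γ q(x)} where γ ≥ 0 is chosen so that Σₓ (p(x) − γq(x))₊ = ε. Then p' achieves the smooth collision divergence: for every nonnegative p'' with Σₓ p''(x) ≤ 1 and ‖p − p''‖₊ ≤ ε one has Σₓ p'(x)²/q(x) ≤ Σₓ p''(x)²/q(x). -/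
open scoped ENNReal

/-- Optimality of the clipped distribution `p'(x) = min{p(x), γq(x)}` for the classical smooth
collision divergence: with `γ` chosen so that `Σₓ (p(x) − γq(x))₊ = ε`, every nonnegative
sub-distribution `p''` with `‖p − p''‖₊ ≤ ε` satisfies `Σₓ p'(x)²/q(x) ≤ Σₓ p''(x)²/q(x)`
(sums taken in `ℝ≥0∞`, so that `a/0 = ∞` for `a > 0` and `0/0 = 0`). -/
theorem clipped_distribution_optimal_for_smooth_collision
    {X : Type*} [Fintype X] (p q : X → ℝ)
    (hp : ∀ x, 0 ≤ p x) (hp1 : ∑ x, p x = 1) (hq : ∀ x, 0 ≤ q x)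
    (ε : ℝ) (hε : ε ∈ Set.Ico (0 : ℝ) 1)
    (γ : ℝ) (hγ : 0 ≤ γ) (hγε : ∑ x, max (p x - γ * q x) 0 = ε)
    (p'' : X → ℝ) (hp''0 : ∀ x, 0 ≤ p'' x) (hp''1 : ∑ x, p'' x ≤ 1)
    (hp''ε : (1 / 2) * |∑ x, (p x - p'' x)| + (1 / 2) * ∑ x, |p x - p'' x| ≤ ε) :
    ∑ x, ENNReal.ofReal (min (p x) (γ * q x)) ^ 2 / ENNReal.ofReal (q x)
      ≤ ∑ x, ENNReal.ofReal (p'' x) ^ 2 / ENNReal.ofReal (q x) := by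
  classical
  by_cases hzero : ∀ x, q x = 0 → p'' x = 0
  · -- main case: `p''` is supported on the support of `q`
    set b : X → ℝ := fun x => min (p x) (γ * q x) with hbdef
    set a : X → ℝ := fun x => min (p'' x) (p x) with hadef
    have ha0 : ∀ x, 0 ≤ a x := fun x => le_min (hp''0 x) (hp x)
    have hb0 : ∀ x, 0 ≤ b x := fun x => le_min (hp x) (mul_nonneg hγ (hq x))
    have hap : ∀ x, a x ≤ p x := fun x => min_le_right _ _
    have haq : ∀ x, q x = 0 → a x = 0 := by
      intro x hx
      have h := hzero x hx
      simp [hadef, h, hp x]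
    have hbq : ∀ x, q x = 0 → b x = 0 := by
      intro x hx
      simp [hbdef, hx, hp x]
    -- sum of b equals 1 - ε
    have hsb : ∑ x, b x = 1 - ε := by
      have hbx : ∀ x, b x = p x - max (p x - γ * q x) 0 := by
        intro x
        rcases le_total (p x) (γ * q x) with h | h
        · rw [hbdef]; simp only
          rw [min_eq_left h, max_eq_right (by linarith)]; ring
        · rw [hbdef]; simp only
          rw [min_eq_right h, max_eq_left (by linarith)]; ring
      simp only [hbx]
      rw [Finset.sum_sub_distrib, hp1, hγε]
    -- sum of max (p - p'') 0 is at most ε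
    have hsum_max : ∑ x, max (p x - p'' x) 0 ≤ ε := by
      have hdsum : ∑ x, (p x - p'' x) = 1 - ∑ x, p'' x := by
        rw [Finset.sum_sub_distrib, hp1]
      have hdnn : 0 ≤ ∑ x, (p x - p'' x) := by rw [hdsum]; linarith
      have habs : |∑ x, (p x - p'' x)| = ∑ x, (p x - p'' x) := abs_of_nonneg hdnn
      have hmax : ∀ x, max (p x - p'' x) 0 = ((p x - p'' x) + |p x - p'' x|) / 2 := by
        intro x
        rcases le_total 0 (p x - p'' x) with h | h
        · rw [max_eq_left h, abs_of_nonneg h]; ring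
        · rw [max_eq_right h, abs_of_nonpos h]; ring
      have hsplit : ∑ x, max (p x - p'' x) 0
          = ((∑ x, (p x - p'' x)) + ∑ x, |p x - p'' x|) / 2 := by
        simp only [hmax]
        rw [← Finset.sum_div, Finset.sum_add_distrib]
      rw [hsplit]
      linarith [hp''ε, habs.ge, habs.le]
    -- sum of a is at least 1 - ε
    have hsa : 1 - ε ≤ ∑ x, a x := by
      have hda : ∀ x, p x - a x = max (p x - p'' x) 0 := by
        intro x
        rcases le_total (p'' x) (p x) with h | h
        · rw [hadef]; simp only
          rw [min_eq_left h, max_eq_left (by linarith)]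
        · rw [hadef]; simp only
          rw [min_eq_right h, max_eq_right (by linarith), sub_self]
      have h1 : ∑ x, (p x - a x) = ∑ x, max (p x - p'' x) 0 :=
        Finset.sum_congr rfl fun x _ => hda x
      rw [Finset.sum_sub_distrib, hp1] at h1
      linarith
    -- pointwise convexity inequality
    have hkey : ∀ x, b x ^ 2 / q x + 2 * γ * (a x - b x) ≤ a x ^ 2 / q x := by
      intro x
      rcases (hq x).eq_or_lt with hqx | hqx
      · rw [haq x hqx.symm, hbq x hqx.symm]; simp
      · have hprod : 0 ≤ (a x - b x) * (a x + b x - 2 * γ * q x) := by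
          rcases le_total (p x) (γ * q x) with h | h
          · have hbx : b x = p x := min_eq_left h
            have h1 : a x - b x ≤ 0 := by rw [hbx]; linarith [hap x]
            have h2 : a x + b x - 2 * γ * q x ≤ 0 := by
              rw [hbx]; linarith [hap x]
            nlinarith [mul_nonneg (neg_nonneg.2 h1) (neg_nonneg.2 h2)]
          · have hbx : b x = γ * q x := min_eq_right h
            rw [hbx]
            nlinarith [sq_nonneg (a x - γ * q x)]
        have hid : a x ^ 2 / q x - (b x ^ 2 / q x + 2 * γ * (a x - b x))
            = (a x - b x) * (a x + b x - 2 * γ * q x) / q x := by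
          field_simp
          ring
        have hnn := div_nonneg hprod (hq x)
        linarith [hid]
    -- the real inequality
    have hreal : ∑ x, b x ^ 2 / q x ≤ ∑ x, p'' x ^ 2 / q x := by
      have h1 : ∑ x, b x ^ 2 / q x ≤ ∑ x, a x ^ 2 / q x := by
        have hsum := Finset.sum_le_sum (s := Finset.univ) (fun x _ => hkey x)
        rw [Finset.sum_add_distrib] at hsum
        have heq : ∑ x, 2 * γ * (a x - b x) = 2 * γ * ((∑ x, a x) - ∑ x, b x) := by
          rw [← Finset.mul_sum, Finset.sum_sub_distrib]
        have hnn : 0 ≤ 2 * γ * ((∑ x, a x) - ∑ x, b x) :=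
          mul_nonneg (by linarith) (by linarith [hsa, hsb])
        linarith [hsum, heq.ge, heq.le]
      have h2 : ∑ x, a x ^ 2 / q x ≤ ∑ x, p'' x ^ 2 / q x := by
        refine Finset.sum_le_sum fun x _ => ?_
        rcases (hq x).eq_or_lt with hqx | hqx
        · rw [← hqx, div_zero, div_zero]
        · exact div_le_div_of_nonneg_right
            (pow_le_pow_left₀ (ha0 x) (min_le_left _ _) 2) hqx.le
      linarith
    -- convert to ENNReal
    have hL : ∀ x, ENNReal.ofReal (min (p x) (γ * q x)) ^ 2 / ENNReal.ofReal (q x)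
        = ENNReal.ofReal (b x ^ 2 / q x) := by
      intro x
      rcases (hq x).eq_or_lt with hqx | hqx
      · have := hbq x hqx.symm
        rw [hbdef] at this ⊢
        simp only at this
        rw [this, ← hqx]
        simp
      · rw [ENNReal.ofReal_div_of_pos hqx, ENNReal.ofReal_pow (hb0 x)]
    have hR : ∀ x, ENNReal.ofReal (p'' x) ^ 2 / ENNReal.ofReal (q x)
        = ENNReal.ofReal (p'' x ^ 2 / q x) := by
      intro x
      rcases (hq x).eq_or_lt with hqx | hqx
      · rw [hzero x hqx.symm, ← hqx]
        simp
      · rw [ENNReal.ofReal_div_of_pos hqx, ENNReal.ofReal_pow (hp''0 x)]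
    calc ∑ x, ENNReal.ofReal (min (p x) (γ * q x)) ^ 2 / ENNReal.ofReal (q x)
        = ENNReal.ofReal (∑ x, b x ^ 2 / q x) := by
          rw [ENNReal.ofReal_sum_of_nonneg fun x _ => div_nonneg (sq_nonneg _) (hq x)]
          exact Finset.sum_congr rfl fun x _ => hL x
      _ ≤ ENNReal.ofReal (∑ x, p'' x ^ 2 / q x) := ENNReal.ofReal_le_ofReal hreal
      _ = ∑ x, ENNReal.ofReal (p'' x) ^ 2 / ENNReal.ofReal (q x) := by
          rw [ENNReal.ofReal_sum_of_nonneg fun x _ => div_nonneg (sq_nonneg _) (hq x)]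
          exact Finset.sum_congr rfl fun x _ => (hR x).symm
  · -- degenerate case: the right-hand side is infinite
    push_neg at hzero
    obtain ⟨x₀, hq0, hne⟩ := hzero
    have hpos : 0 < p'' x₀ := lt_of_le_of_ne (hp''0 x₀) (Ne.symm hne)
    have htop : ENNReal.ofReal (p'' x₀) ^ 2 / ENNReal.ofReal (q x₀) = ⊤ := by
      rw [hq0, ENNReal.ofReal_zero, ENNReal.div_zero]
      exact pow_ne_zero _ (by simp [ENNReal.ofReal_eq_zero]; linarith)
    have : (∑ x, ENNReal.ofReal (p'' x) ^ 2 / ENNReal.ofReal (q x)) = ⊤ :=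
      ENNReal.sum_eq_top.2 ⟨x₀, Finset.mem_univ _, htop⟩
    rw [this]
    exact le_top
end

section
/- Let p be a probability distribution and q a nonnegative distribution on a finite alphabet, ε ∈ (0,1), and let γ ≥ 0 satisfy Σₓ(p(x) − γq(x))₊ = ε. With p'(x) = min{p(x), γq(x)}, one has Σₓ p'(x)²/q(x) ≤ γ(1 − ε). Equivalently, the classical smooth collision divergence satisfies D₂^{ε,T}(p‖q) ≤ D_max^{ε,T}(p‖q) − log(1/(1−ε)). -/
open scoped ENNReal

/-- With `p'(x) = min{p(x), γq(x)}` and `γ ≥ 0` such that `Σₓ (p(x) − γq(x))₊ = ε`, one has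
`Σₓ p'(x)²/q(x) ≤ γ(1 − ε)`; equivalently,
`D₂^{ε,T}(p‖q) ≤ D_max^{ε,T}(p‖q) − log(1/(1−ε))`.
Sums are taken in `ℝ≥0∞` with the conventions `a/0 = ∞` for `a > 0` and `0/0 = 0`. -/
theorem smooth_collision_le_gamma_mul_one_sub_eps
    {X : Type*} [Fintype X] (p q : X → ℝ)
    (hp : ∀ x, 0 ≤ p x) (hp1 : ∑ x, p x = 1) (hq : ∀ x, 0 ≤ q x)
    (ε : ℝ) (hε : ε ∈ Set.Ioo (0 : ℝ) 1)
    (γ : ℝ) (hγ : 0 ≤ γ) (hγε : ∑ x, max (p x - γ * q x) 0 = ε) :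
    ∑ x, ENNReal.ofReal (min (p x) (γ * q x)) ^ 2 / ENNReal.ofReal (q x)
      ≤ ENNReal.ofReal (γ * (1 - ε)) := by
  have hmin : ∀ x, 0 ≤ min (p x) (γ * q x) := fun x =>
    le_min (hp x) (mul_nonneg hγ (hq x))
  have key : ∑ x, min (p x) (γ * q x) = 1 - ε := by
    have : ∀ x, min (p x) (γ * q x) = p x - max (p x - γ * q x) 0 := by
      intro x
      rcases le_total (p x) (γ * q x) with h | h
      · rw [min_eq_left h, max_eq_right (by linarith)]; ring
      · rw [min_eq_right h, max_eq_left (by linarith)]; ring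
    simp_rw [this, Finset.sum_sub_distrib, hp1, hγε]
  have step : ∀ x, ENNReal.ofReal (min (p x) (γ * q x)) ^ 2 / ENNReal.ofReal (q x)
      ≤ ENNReal.ofReal (γ * min (p x) (γ * q x)) := by
    intro x
    rcases eq_or_lt_of_le (hq x) with h | h
    · have : min (p x) (γ * q x) = 0 := by
        rw [← h, mul_zero, min_eq_right (hp x)]
      simp [this]
    · rw [← ENNReal.ofReal_pow (hmin x), ← ENNReal.ofReal_div_of_pos h]
      apply ENNReal.ofReal_le_ofReal
      rw [div_le_iff₀ h, sq]
      have h1 : min (p x) (γ * q x) ≤ γ * q x := min_le_right _ _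
      nlinarith [hmin x]
  calc ∑ x, ENNReal.ofReal (min (p x) (γ * q x)) ^ 2 / ENNReal.ofReal (q x)
      ≤ ∑ x, ENNReal.ofReal (γ * min (p x) (γ * q x)) :=
        Finset.sum_le_sum fun x _ => step x
    _ = ENNReal.ofReal (∑ x, γ * min (p x) (γ * q x)) :=
        (ENNReal.ofReal_sum_of_nonneg fun x _ => mul_nonneg hγ (hmin x)).symm
    _ = ENNReal.ofReal (γ * (1 - ε)) := by
        rw [← Finset.mul_sum, key]
end

section
/- Let p be a probability distribution, q a nonnegative distribution, ε ∈ (0,1), α ∈ (1,2], and let γ ≥ 0 satisfy Σₓ(p(x) − γq(x))₊ = ε. With p'(x) = min{p(x), γq(x)}, one has Σₓ p'(x)²/q(x) ≤ γ^{2−α} · Σₓ p(x)^α q(x)^{1−α}. Equivalently, D₂^{ε,T}(p‖q) ≤ (α−1) D_α(p‖q) + (2−α) D_max^{ε,T}(p‖q). -/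
/-- With `p'(x) = min{p(x), γq(x)}` and `γ ≥ 0` such that `Σₓ (p(x) − γq(x))₊ = ε`, for any
`α ∈ (1,2]` one has `Σₓ p'(x)²/q(x) ≤ γ^{2−α} Σₓ p(x)^α q(x)^{1−α}`; equivalently,
`D₂^{ε,T}(p‖q) ≤ (α−1) D_α(p‖q) + (2−α) D_max^{ε,T}(p‖q)`.
Here `supp p ⊆ supp q` is assumed, and real powers are `Real.rpow`. -/
theorem smooth_collision_le_renyi_interpolation
    {X : Type*} [Fintype X] (p q : X → ℝ)
    (hp : ∀ x, 0 ≤ p x) (hp1 : ∑ x, p x = 1) (hq : ∀ x, 0 ≤ q x)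
    (hsupp : ∀ x, q x = 0 → p x = 0)
    (ε : ℝ) (hε : ε ∈ Set.Ioo (0 : ℝ) 1)
    (α : ℝ) (hα : α ∈ Set.Ioc (1 : ℝ) 2)
    (γ : ℝ) (hγ : 0 ≤ γ) (hγε : ∑ x, max (p x - γ * q x) 0 = ε) :
    ∑ x, (min (p x) (γ * q x)) ^ 2 / q x
      ≤ γ ^ (2 - α) * ∑ x, p x ^ α * q x ^ (1 - α) := by
  obtain ⟨hα1, hα2⟩ := hα
  rw [Finset.mul_sum]
  apply Finset.sum_le_sum
  intro x _
  by_cases hqx : q x = 0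
  · simp [hqx, hsupp x hqx, Real.zero_rpow (by linarith : α ≠ 0)]
  · have hq0 : 0 < q x := lt_of_le_of_ne (hq x) (Ne.symm hqx)
    set m := min (p x) (γ * q x) with hm
    have hm0 : 0 ≤ m := le_min (hp x) (mul_nonneg hγ (hq x))
    rcases eq_or_lt_of_le hm0 with h0 | h0
    · rw [← h0]
      have h1 : (0:ℝ)^2 / q x = 0 := by simp
      rw [h1]
      have := hp x
      positivity
    · rw [div_le_iff₀ hq0]
      have hsplit : m ^ 2 = m ^ α * m ^ (2 - α) := by
        rw [← Real.rpow_natCast m 2, ← Real.rpow_add h0]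
        norm_num
      have h2 : m ^ α ≤ p x ^ α :=
        Real.rpow_le_rpow hm0 (min_le_left _ _) (by linarith)
      have h3 : m ^ (2 - α) ≤ (γ * q x) ^ (2 - α) :=
        Real.rpow_le_rpow hm0 (min_le_right _ _) (by linarith)
      have h4 : (γ * q x) ^ (2 - α) = γ ^ (2 - α) * q x ^ (2 - α) :=
        Real.mul_rpow hγ (hq x)
      have h5 : q x ^ (2 - α) = q x ^ (1 - α) * q x := by
        rw [show (2 - α) = (1 - α) + 1 by ring, Real.rpow_add hq0, Real.rpow_one]
      calc m ^ 2 = m ^ α * m ^ (2 - α) := hsplit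
        _ ≤ p x ^ α * (γ * q x) ^ (2 - α) := by
            apply mul_le_mul h2 h3 (Real.rpow_nonneg hm0 _)
              (Real.rpow_nonneg (hp x) _)
        _ = γ ^ (2 - α) * (p x ^ α * q x ^ (1 - α)) * q x := by
            rw [h4, h5]; ring
end

section
/- The hypothesis testing relative entropy equals the measured smooth Rényi-0 divergence: for any quantum state ρ, any σ ≥ 0, and any ε ∈ [0,1), D_H^ε(ρ‖σ) = sup over quantum measurements M of D₀^{ε,T}(M(ρ)‖M(σ)), where D₀^{ε,T}(p‖q) = max over sub-distributions p' with ‖p−p'‖₊ ≤ ε of −log Σ_{x: p'(x)>0} q(x). -/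
/-!
A test `0 ≤ M ≤ 1` with `Tr((1 - M)ρ) ≤ ε` yields the two-outcome measurement `(M, 1 - M)` together
with the sub-distribution `(Tr Mρ, 0)`, which is `ε`-close to `(Tr Mρ, Tr (1 - M)ρ)`; since
`Tr Mρ ≥ 1 - ε > 0` its support is the first outcome, so its cost is exactly `Tr Mσ`.
Conversely, a measurement `(Mᵢ)` and a sub-distribution `p'` yield the test `Σ_{p'ᵢ ≠ 0} Mᵢ`,
whose type-I error is the mass of `M(ρ)` on the outcomes `p'` discards, and this is bounded by the
generalized trace distance. Hence the two sets of values coincide already before taking infima.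
-/

open Matrix
open scoped ComplexOrder

open scoped MatrixOrder in
theorem Matrix.PosSemidef.trace_mul_nonneg_s19 {𝕜 n : Type*} [RCLike 𝕜] [Fintype n]
    {A B : Matrix n n 𝕜} (hA : A.PosSemidef) (hB : B.PosSemidef) : 0 ≤ (A * B).trace := by
  classical
  obtain ⟨C, rfl⟩ := CStarAlgebra.nonneg_iff_eq_star_mul_self.mp hB.nonneg
  rw [star_eq_conjTranspose, ← Matrix.mul_assoc, trace_mul_cycle]
  exact (hA.mul_mul_conjTranspose_same C).trace_nonneg

section GeneralizedTraceDistance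

variable {ι : Type*} [Fintype ι]

noncomputable def generalizedTraceDistance (p q : ι → ℝ) : ℝ :=
  1 / 2 * |∑ i, (p i - q i)| + 1 / 2 * ∑ i, |p i - q i|

theorem sum_sub_le_generalizedTraceDistance (p q : ι → ℝ) (s : Finset ι) :
    ∑ i ∈ s, (p i - q i) ≤ generalizedTraceDistance p q := by
  classical
  set d := fun i => p i - q i
  have h_abs : ∑ i ∈ s, d i ≤ ∑ i ∈ s, |d i| := Finset.sum_le_sum fun i _ => le_abs_self (d i)
  have h_compl : -∑ i ∈ sᶜ, d i ≤ ∑ i ∈ sᶜ, |d i| := by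
    rw [← Finset.sum_neg_distrib]
    exact Finset.sum_le_sum fun i _ => neg_le_abs (d i)
  have h_total := le_abs_self (∑ i ∈ s, d i + ∑ i ∈ sᶜ, d i)
  change _ ≤ 1 / 2 * |∑ i, d i| + 1 / 2 * ∑ i, |d i|
  rw [← s.sum_add_sum_compl d, ← s.sum_add_sum_compl (fun i => |d i|)]
  linarith

end GeneralizedTraceDistance

section MeasuredSmoothRenyiZero

variable {n : Type*} [Fintype n] [DecidableEq n]

/-- Its infimum is `exp (-D_H^ε(ρ‖σ))`. -/
def hypothesisTestingValues (ρ σ : Matrix n n ℂ) (ε : ℝ) : Set ℝ :=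
  {r | ∃ M : Matrix n n ℂ, M.PosSemidef ∧ (1 - M).PosSemidef ∧
    (((1 - M) * ρ).trace).re ≤ ε ∧ r = ((M * σ).trace).re}

/-- Its infimum is `exp (-sup_M D₀^{ε,T}(M(ρ)‖M(σ)))`, the supremum over finite POVMs `M`. -/
def measuredSmoothRenyiZeroValues (ρ σ : Matrix n n ℂ) (ε : ℝ) : Set ℝ :=
  {r | ∃ (k : ℕ) (M : Fin k → Matrix n n ℂ) (p' : Fin k → ℝ),
    (∀ i, (M i).PosSemidef) ∧ (∑ i, M i = 1) ∧ (∀ i, 0 ≤ p' i) ∧ (∑ i, p' i ≤ 1) ∧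
    generalizedTraceDistance (fun i => ((M i * ρ).trace).re) p' ≤ ε ∧
    r = ∑ i ∈ Finset.univ.filter (fun i => p' i ≠ 0), ((M i * σ).trace).re}

theorem measuredSmoothRenyiZeroValues_subset_hypothesisTestingValues
    (ρ σ : Matrix n n ℂ) (ε : ℝ) :
    measuredSmoothRenyiZeroValues ρ σ ε ⊆ hypothesisTestingValues ρ σ ε := by
  rintro r ⟨k, M, p', hM, hM_sum, -, -, hdist, rfl⟩
  set F := Finset.univ.filter (fun i => p' i ≠ 0)
  have h_compl : 1 - ∑ i ∈ F, M i = ∑ i ∈ Fᶜ, M i := by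
    rw [← hM_sum, ← F.sum_add_sum_compl M, add_sub_cancel_left]
  refine ⟨∑ i ∈ F, M i, posSemidef_sum F fun i _ => hM i,
    h_compl ▸ posSemidef_sum Fᶜ fun i _ => hM i, ?_, ?_⟩
  · calc (((1 - ∑ i ∈ F, M i) * ρ).trace).re
        = ∑ i ∈ Fᶜ, (((M i * ρ).trace).re - p' i) := by
          rw [h_compl]
          simp only [Finset.sum_mul, trace_sum, Complex.re_sum]
          refine Finset.sum_congr rfl fun i hi => ?_
          simp_all [F]
      _ ≤ generalizedTraceDistance (fun i => ((M i * ρ).trace).re) p' :=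
          sum_sub_le_generalizedTraceDistance _ _ _
      _ ≤ ε := hdist
  · simp only [Finset.sum_mul, trace_sum, Complex.re_sum]

theorem hypothesisTestingValues_subset_measuredSmoothRenyiZeroValues
    {ρ : Matrix n n ℂ} (hρ : ρ.PosSemidef) (hρ1 : ρ.trace = 1) (σ : Matrix n n ℂ) {ε : ℝ}
    (hε : ε < 1) :
    hypothesisTestingValues ρ σ ε ⊆ measuredSmoothRenyiZeroValues ρ σ ε := by
  rintro r ⟨M, hM, hM', hM_err, rfl⟩
  set t := (((1 - M) * ρ).trace).re
  have ht : 0 ≤ t := (Complex.nonneg_iff.mp (hM'.trace_mul_nonneg_s19 hρ)).1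
  have h_split : ((M * ρ).trace).re = 1 - t := by
    have h_sum : M * ρ + (1 - M) * ρ = ρ := by rw [← add_mul, add_sub_cancel, one_mul]
    have h := congrArg (fun A => (trace A).re) h_sum
    simp only [trace_add, Complex.add_re, hρ1, Complex.one_re] at h
    linarith
  have h_pos : 1 - t ≠ 0 := by linarith
  refine ⟨2, ![M, 1 - M], ![1 - t, 0], Fin.forall_fin_two.mpr ⟨hM, hM'⟩, by simp,
    Fin.forall_fin_two.mpr ⟨(by linarith : (0 : ℝ) ≤ 1 - t), le_rfl⟩, by simp [ht], ?_, ?_⟩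
  · simp [generalizedTraceDistance, h_split]
    linarith [abs_of_nonneg ht]
  · simp [Finset.sum_filter, h_pos]

end MeasuredSmoothRenyiZero

theorem hypothesisTesting_eq_measured_smooth_renyi_zero_general
    {n : Type*} [Fintype n] [DecidableEq n]
    (ρ σ : Matrix n n ℂ) (hρ : ρ.PosSemidef) (hρ1 : ρ.trace = 1)
    (ε : ℝ) (hε : ε ∈ Set.Ico (0 : ℝ) 1) :
    sInf {r : ℝ | ∃ M : Matrix n n ℂ, M.PosSemidef ∧ (1 - M).PosSemidef ∧
        (((1 - M) * ρ).trace).re ≤ ε ∧ r = ((M * σ).trace).re}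
      = sInf {r : ℝ | ∃ (k : ℕ) (M : Fin k → Matrix n n ℂ) (p' : Fin k → ℝ),
          (∀ i, (M i).PosSemidef) ∧ (∑ i, M i = 1) ∧
          (∀ i, 0 ≤ p' i) ∧ (∑ i, p' i ≤ 1) ∧
          ((1 / 2) * |∑ i, (((M i * ρ).trace).re - p' i)| +
              (1 / 2) * ∑ i, |((M i * ρ).trace).re - p' i| ≤ ε) ∧
          r = ∑ i ∈ Finset.univ.filter (fun i => p' i ≠ 0), ((M i * σ).trace).re} :=
  congrArg sInf <|
    (hypothesisTestingValues_subset_measuredSmoothRenyiZeroValues hρ hρ1 σ hε.2).antisymm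
      (measuredSmoothRenyiZeroValues_subset_hypothesisTestingValues ρ σ ε)

/-- The hypothesis testing relative entropy equals the measured smooth Rényi-0 divergence,
stated multiplicatively as an equality of infima:
`inf {Tr Mσ : 0 ≤ M ≤ I, Tr((I−M)ρ) ≤ ε}` equals the infimum over all finite POVMs
`(Mᵢ)ᵢ` and all sub-distributions `p'` with `‖M(ρ) − p'‖₊ ≤ ε` of `Σ_{i : p'ᵢ ≠ 0} Tr(Mᵢσ)`.
Taking `−log` of both sides gives `D_H^ε(ρ‖σ) = sup_M D₀^{ε,T}(M(ρ)‖M(σ))`. -/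
theorem hypothesisTesting_eq_measured_smooth_renyi_zero
    {n : Type*} [Fintype n] [DecidableEq n]
    (ρ σ : Matrix n n ℂ) (hρ : ρ.PosSemidef) (hρ1 : ρ.trace = 1) (hσ : σ.PosSemidef)
    (ε : ℝ) (hε : ε ∈ Set.Ico (0 : ℝ) 1) :
    sInf {r : ℝ | ∃ M : Matrix n n ℂ, M.PosSemidef ∧ (1 - M).PosSemidef ∧
        (((1 - M) * ρ).trace).re ≤ ε ∧ r = ((M * σ).trace).re}
      = sInf {r : ℝ | ∃ (k : ℕ) (M : Fin k → Matrix n n ℂ) (p' : Fin k → ℝ),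
          (∀ i, (M i).PosSemidef) ∧ (∑ i, M i = 1) ∧
          (∀ i, 0 ≤ p' i) ∧ (∑ i, p' i ≤ 1) ∧
          ((1 / 2) * |∑ i, (((M i * ρ).trace).re - p' i)| +
              (1 / 2) * ∑ i, |((M i * ρ).trace).re - p' i| ≤ ε) ∧
          r = ∑ i ∈ Finset.univ.filter (fun i => p' i ≠ 0), ((M i * σ).trace).re} :=
  hypothesisTesting_eq_measured_smooth_renyi_zero_general ρ σ hρ hρ1 ε hε
end
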